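/- Let n, ℓ be nonnegative integers and let α, β be real numbers with 0 < β < α < 1. For γ ∈ (0,1) let B_γ be the 2×2 real matrix with diagonal entries (1+γ)/2 and off-diagonal entries (1−γ)/2, and let C_γ = B_γ^{⊗n} ⊗ I₂^{⊗ℓ}, a 2^{n+ℓ} × 2^{n+ℓ} matrix, where I₂ is the 2×2 identity. Then for every vector v ∈ ℝ^{2^{n+ℓ}}, ‖C_α v‖₁ ≤ 2^{(n+ℓ)/2} · (α/β)^n · ‖C_β v‖₁, where ‖·‖₁ denotes the sum of absolute values of coordinates. -/
import Mathlib


noncomputable section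

/-- The `2×2` matrix `B_γ` with diagonal entries `(1+γ)/2` and off-diagonal entries
`(1-γ)/2`, with rows and columns indexed by `Bool`. -/
def Bmat (γ : ℝ) (a b : Bool) : ℝ := if a = b then (1 + γ) / 2 else (1 - γ) / 2

/-- The Kronecker product `C_γ = B_γ^{⊗n} ⊗ I₂^{⊗ℓ}`, written entrywise with rows and
columns indexed by `{0,1}^n × {0,1}^ℓ`. -/
def Cmat (n ℓ : ℕ) (γ : ℝ) :
    Matrix ((Fin n → Bool) × (Fin ℓ → Bool)) ((Fin n → Bool) × (Fin ℓ → Bool)) ℝ :=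
  fun p q => (∏ i : Fin n, Bmat γ (p.1 i) (q.1 i)) * (if p.2 = q.2 then 1 else 0)

lemma Bmat_mul (γ δ : ℝ) (a b : Bool) :
    ∑ c : Bool, Bmat γ a c * Bmat δ c b = Bmat (γ * δ) a b := by
  cases a <;> cases b <;> simp [Bmat] <;> ring

lemma Cmat_mul (n ℓ : ℕ) (γ δ : ℝ) :
    Cmat n ℓ γ * Cmat n ℓ δ = Cmat n ℓ (γ * δ) := by
  ext ⟨p1, p2⟩ ⟨r1, r2⟩
  simp only [Matrix.mul_apply, Cmat, Fintype.sum_prod_type]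
  have h1 : ∀ q1 : Fin n → Bool,
      ∑ q2 : Fin ℓ → Bool,
        (∏ i, Bmat γ (p1 i) (q1 i)) * (if p2 = q2 then (1:ℝ) else 0) *
          ((∏ i, Bmat δ (q1 i) (r1 i)) * (if q2 = r2 then 1 else 0)) =
        ((∏ i, Bmat γ (p1 i) (q1 i)) * (∏ i, Bmat δ (q1 i) (r1 i))) *
          (if p2 = r2 then 1 else 0) := by
    intro q1
    rw [Finset.sum_eq_single p2]
    · by_cases h : p2 = r2 <;> simp [h]
    · intro b _ hb; simp [Ne.symm hb]
    · simp
  rw [Finset.sum_congr rfl fun q1 _ => h1 q1]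
  rw [← Finset.sum_mul]
  congr 1
  simp_rw [← Bmat_mul γ δ, Finset.prod_univ_sum, Fintype.piFinset_univ,
    Finset.prod_mul_distrib]

lemma Bmat_abs_col (γ : ℝ) (hγ : 1 ≤ γ) (b : Bool) :
    ∑ a : Bool, |Bmat γ a b| = γ := by
  have h1 : |(1 + γ) / 2| = (1 + γ) / 2 := abs_of_nonneg (by linarith)
  have h2 : |(1 - γ) / 2| = (γ - 1) / 2 := by
    rw [abs_of_nonpos (by linarith)]; ring
  cases b <;> simp [Bmat, h1, h2] <;> ring

lemma Cmat_colsum (n ℓ : ℕ) (γ : ℝ) (hγ : 1 ≤ γ) (q : (Fin n → Bool) × (Fin ℓ → Bool)) :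
    ∑ p : (Fin n → Bool) × (Fin ℓ → Bool), |Cmat n ℓ γ p q| = γ ^ n := by
  simp only [Cmat, abs_mul, Finset.abs_prod, Fintype.sum_prod_type]
  have h2 : ∀ p2 : Fin ℓ → Bool, |if p2 = q.2 then (1:ℝ) else 0| = if p2 = q.2 then 1 else 0 := by
    intro p2; split <;> simp
  simp_rw [h2]
  rw [← Finset.sum_mul_sum]
  rw [Finset.sum_ite_eq' Finset.univ q.2 (fun _ => (1:ℝ))]
  simp only [Finset.mem_univ, if_true, mul_one]
  have : ∀ p1 : Fin n → Bool, ∏ i, |Bmat γ (p1 i) (q.1 i)|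
      = ∏ i, (fun i c => |Bmat γ c (q.1 i)|) i (p1 i) := fun _ => rfl
  have key : (∏ i : Fin n, ∑ c : Bool, |Bmat γ c (q.1 i)|) =
      ∑ p1 : Fin n → Bool, ∏ i, |Bmat γ (p1 i) (q.1 i)| := by
    rw [Finset.prod_univ_sum]; rw [Fintype.piFinset_univ]
  rw [← key]
  have hcol : ∀ i : Fin n, ∑ c : Bool, |Bmat γ c (q.1 i)| = γ := fun i => Bmat_abs_col γ hγ _
  rw [Finset.prod_congr rfl fun i _ => hcol i, Finset.prod_const, Finset.card_univ,
    Fintype.card_fin]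

lemma l1_bound (n ℓ : ℕ) (γ : ℝ) (hγ : 1 ≤ γ)
    (w : ((Fin n → Bool) × (Fin ℓ → Bool)) → ℝ) :
    ∑ p : (Fin n → Bool) × (Fin ℓ → Bool), |(Cmat n ℓ γ).mulVec w p| ≤
      γ ^ n * ∑ p : (Fin n → Bool) × (Fin ℓ → Bool), |w p| := by
  calc ∑ p, |(Cmat n ℓ γ).mulVec w p|
      ≤ ∑ p, ∑ q, |Cmat n ℓ γ p q| * |w q| := by
        refine Finset.sum_le_sum fun p _ => ?_
        simp only [Matrix.mulVec, dotProduct]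
        refine (Finset.abs_sum_le_sum_abs _ _).trans ?_
        simp [abs_mul, le_refl]
    _ = ∑ q, (∑ p, |Cmat n ℓ γ p q|) * |w q| := by
        rw [Finset.sum_comm]; simp [Finset.sum_mul]
    _ = γ ^ n * ∑ q, |w q| := by
        simp_rw [Cmat_colsum n ℓ γ hγ]
        rw [Finset.mul_sum]

/-- For `0 < β < α < 1` and every vector `v`,
`‖C_α v‖₁ ≤ 2^{(n+ℓ)/2} · (α/β)^n · ‖C_β v‖₁`. -/
theorem stmt17 (n ℓ : ℕ) (α β : ℝ) (hβ : 0 < β) (hβα : β < α) (hα : α < 1)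
    (v : ((Fin n → Bool) × (Fin ℓ → Bool)) → ℝ) :
    ∑ i : (Fin n → Bool) × (Fin ℓ → Bool), |(Cmat n ℓ α).mulVec v i| ≤
      (2 : ℝ) ^ (((n : ℝ) + (ℓ : ℝ)) / 2) * (α / β) ^ n *
        ∑ i : (Fin n → Bool) × (Fin ℓ → Bool), |(Cmat n ℓ β).mulVec v i| := by
  have hβ' : β ≠ 0 := ne_of_gt hβ
  have hratio : 1 ≤ α / β := (one_le_div hβ).2 hβα.le
  have hCα : Cmat n ℓ α = Cmat n ℓ (α / β) * Cmat n ℓ β := by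
    rw [Cmat_mul, div_mul_cancel₀ _ hβ']
  have key : ∑ i : (Fin n → Bool) × (Fin ℓ → Bool), |(Cmat n ℓ α).mulVec v i| ≤
      (α / β) ^ n * ∑ i : (Fin n → Bool) × (Fin ℓ → Bool), |(Cmat n ℓ β).mulVec v i| := by
    rw [hCα, ← Matrix.mulVec_mulVec]
    exact l1_bound n ℓ (α / β) hratio _
  refine key.trans ?_
  have h2 : (1:ℝ) ≤ (2 : ℝ) ^ (((n : ℝ) + (ℓ : ℝ)) / 2) := by
    apply Real.one_le_rpow one_le_two
    positivity
  have hsum : 0 ≤ ∑ i : (Fin n → Bool) × (Fin ℓ → Bool), |(Cmat n ℓ β).mulVec v i| :=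
    Finset.sum_nonneg fun i _ => abs_nonneg _
  have hpow : (0:ℝ) ≤ (α / β) ^ n := by positivity
  nlinarith [mul_le_mul_of_nonneg_right (mul_le_mul_of_nonneg_right h2 hpow) hsum]
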